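/- Fix a unit self-dual matrix x_J (‖x_J‖² normalized so that x_J corresponds to a complex structure J on ℝ⁴). A 2-plane spanned by orthonormal vectors ξ, η ∈ ℝ⁴ is Lagrangian with respect to the Kähler form ω_J(ξ,η) = ⟨Jξ, η⟩, i.e. ω_J(ξ,η) = 0, if and only if the self-dual part P₊(ξ∧η) of the corresponding decomposable matrix F = ξηᵀ − ηξᵀ is orthogonal to x_J: ⟨x_J, P₊F⟩ = 0. Consequently, under the bijection G(2,4) ≅ S²₊ × S²₋, the Lagrangian Grassmannian corresponds to S¹ × S²₋, where S¹ is the great circle in S²₊ orthogonal to x_J. -/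

import Mathlib

open Matrix

/-- The Hodge star operator on (antisymmetric) real 4×4 matrices, determined by
`(⋆F)₁₂ = F₃₄`, `(⋆F)₁₃ = −F₂₄`, `(⋆F)₁₄ = F₂₃`, `(⋆F)₂₃ = F₁₄`,
`(⋆F)₂₄ = −F₁₃`, `(⋆F)₃₄ = F₁₂` (indices here are 1-based). -/
def hodge (F : Matrix (Fin 4) (Fin 4) ℝ) : Matrix (Fin 4) (Fin 4) ℝ :=
  !![0, F 2 3, -(F 1 3), F 1 2;
     -(F 2 3), 0, F 0 3, -(F 0 2);
     F 1 3, -(F 0 3), 0, F 0 1;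
     -(F 1 2), F 0 2, -(F 0 1), 0]

/-- The inner product `⟨F,G⟩ = Σ_{i<j} F_{ij} G_{ij}` on 4×4 matrices. -/
def inner2 (F G : Matrix (Fin 4) (Fin 4) ℝ) : ℝ :=
  ∑ i : Fin 4, ∑ j : Fin 4, if i < j then F i j * G i j else 0

/-- The projection `P₊ = ½(1 + ⋆)` onto self-dual matrices. -/
noncomputable def Pplus (F : Matrix (Fin 4) (Fin 4) ℝ) : Matrix (Fin 4) (Fin 4) ℝ :=
  (1/2 : ℝ) • (F + hodge F)

/-- The projection `P₋ = ½(1 − ⋆)` onto anti-self-dual matrices. -/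
noncomputable def Pminus (F : Matrix (Fin 4) (Fin 4) ℝ) : Matrix (Fin 4) (Fin 4) ℝ :=
  (1/2 : ℝ) • (F - hodge F)

/-! Pairing with an antisymmetric `x_J` turns the wedge into a bilinear form,
`⟨x_J, ξ ∧ η⟩ = ξ ⬝ x_J η = ⟨Jξ, η⟩` with `J = x_Jᵀ`, and since `⋆` is self-adjoint, a self-dual
`x_J` only sees the self-dual part of `ξ ∧ η`. For the Grassmannian, an antisymmetric `F` is
decomposable iff it satisfies the Plücker relation `⟨F, ⋆F⟩ = 0`. Writing `F = p + q` with
`p = P₊F`, `q = P₋F`, this relation reads `|p|² = |q|²` and `|F|² = |p|² + |q|²`, while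
orthogonality to `x_J` constrains only `p`. -/

def wedge {ι R : Type*} [CommRing R] (u v : ι → R) : Matrix ι ι R :=
  vecMulVec u v - vecMulVec v u

theorem wedge_transpose {ι R : Type*} [CommRing R] (u v : ι → R) :
    (wedge u v)ᵀ = -wedge u v := by
  simp [wedge, transpose_vecMulVec]

section

variable {F p q X : Matrix (Fin 4) (Fin 4) ℝ}

theorem exists_eq_of_transpose_eq_neg (hF : Fᵀ = -F) :
    ∃ a₀₁ a₀₂ a₀₃ a₁₂ a₁₃ a₂₃ : ℝ, F = !![0, a₀₁, a₀₂, a₀₃; -a₀₁, 0, a₁₂, a₁₃;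
      -a₀₂, -a₁₂, 0, a₂₃; -a₀₃, -a₁₃, -a₂₃, 0] := by
  have hF' (i j : Fin 4) : F j i = -F i j := by simpa using congr_fun (congr_fun hF i) j
  refine ⟨F 0 1, F 0 2, F 0 3, F 1 2, F 1 3, F 2 3, ?_⟩
  ext i j
  fin_cases i <;> fin_cases j <;> simp <;>
    linarith [hF' 0 0, hF' 1 1, hF' 2 2, hF' 3 3, hF' 0 1, hF' 0 2, hF' 0 3, hF' 1 2, hF' 1 3,
      hF' 2 3]

theorem inner2_eq (F G : Matrix (Fin 4) (Fin 4) ℝ) :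
    inner2 F G = F 0 1 * G 0 1 + F 0 2 * G 0 2 + F 0 3 * G 0 3
      + F 1 2 * G 1 2 + F 1 3 * G 1 3 + F 2 3 * G 2 3 := by
  simp [inner2, Fin.sum_univ_four]
  ring

theorem inner2_comm (F G : Matrix (Fin 4) (Fin 4) ℝ) : inner2 F G = inner2 G F := by
  simp only [inner2_eq]; ring

theorem inner2_add_left (F G X : Matrix (Fin 4) (Fin 4) ℝ) :
    inner2 (F + G) X = inner2 F X + inner2 G X := by
  simp only [inner2_eq, Matrix.add_apply]; ring

theorem inner2_add_right (X F G : Matrix (Fin 4) (Fin 4) ℝ) :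
    inner2 X (F + G) = inner2 X F + inner2 X G := by
  simp only [inner2_eq, Matrix.add_apply]; ring

theorem inner2_smul_right (r : ℝ) (X F : Matrix (Fin 4) (Fin 4) ℝ) :
    inner2 X (r • F) = r * inner2 X F := by
  simp only [inner2_eq, Matrix.smul_apply, smul_eq_mul]; ring

theorem inner2_neg_right (X F : Matrix (Fin 4) (Fin 4) ℝ) :
    inner2 X (-F) = -inner2 X F := by
  simp only [inner2_eq, Matrix.neg_apply]; ring

theorem hodge_add (F G : Matrix (Fin 4) (Fin 4) ℝ) : hodge (F + G) = hodge F + hodge G := by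
  ext i j; fin_cases i <;> fin_cases j <;> simp [hodge] <;> ring

theorem hodge_sub (F G : Matrix (Fin 4) (Fin 4) ℝ) : hodge (F - G) = hodge F - hodge G := by
  ext i j; fin_cases i <;> fin_cases j <;> simp [hodge] <;> ring

theorem hodge_smul (r : ℝ) (F : Matrix (Fin 4) (Fin 4) ℝ) : hodge (r • F) = r • hodge F := by
  ext i j; fin_cases i <;> fin_cases j <;> simp [hodge]

theorem hodge_transpose (F : Matrix (Fin 4) (Fin 4) ℝ) : (hodge F)ᵀ = -hodge F := by
  ext i j; fin_cases i <;> fin_cases j <;> simp [hodge]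

theorem hodge_hodge (hF : Fᵀ = -F) : hodge (hodge F) = F := by
  obtain ⟨a₀₁, a₀₂, a₀₃, a₁₂, a₁₃, a₂₃, rfl⟩ := exists_eq_of_transpose_eq_neg hF
  ext i j; fin_cases i <;> fin_cases j <;> simp [hodge]

theorem inner2_hodge_left (F G : Matrix (Fin 4) (Fin 4) ℝ) :
    inner2 (hodge F) G = inner2 F (hodge G) := by
  simp only [inner2_eq, hodge]; simp; ring

theorem inner2_eq_zero_of_hodge (hp : hodge p = p) (hq : hodge q = -q) : inner2 p q = 0 := by
  have h := inner2_hodge_left p q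
  rw [hp, hq, inner2_neg_right] at h
  linarith

theorem inner2_Pplus_right_of_hodge (hX : hodge X = X) (F : Matrix (Fin 4) (Fin 4) ℝ) :
    inner2 X (Pplus F) = inner2 X F := by
  rw [Pplus, inner2_smul_right, inner2_add_right, ← inner2_hodge_left, hX]
  ring

theorem Pplus_transpose (hF : Fᵀ = -F) : (Pplus F)ᵀ = -Pplus F := by
  rw [Pplus, transpose_smul, transpose_add, hF, hodge_transpose]; module

theorem Pminus_transpose (hF : Fᵀ = -F) : (Pminus F)ᵀ = -Pminus F := by
  rw [Pminus, transpose_smul, transpose_sub, hF, hodge_transpose]; module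

theorem hodge_Pplus (hF : Fᵀ = -F) : hodge (Pplus F) = Pplus F := by
  rw [Pplus, hodge_smul, hodge_add, hodge_hodge hF, add_comm]

theorem hodge_Pminus (hF : Fᵀ = -F) : hodge (Pminus F) = -Pminus F := by
  rw [Pminus, hodge_smul, hodge_sub, hodge_hodge hF]
  module

theorem inner2_Pplus_self (F : Matrix (Fin 4) (Fin 4) ℝ) :
    inner2 (Pplus F) (Pplus F) = (inner2 F F + inner2 F (hodge F)) / 2 := by
  simp only [inner2_eq, Pplus, hodge]; simp; ring

theorem inner2_Pminus_self (F : Matrix (Fin 4) (Fin 4) ℝ) :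
    inner2 (Pminus F) (Pminus F) = (inner2 F F - inner2 F (hodge F)) / 2 := by
  simp only [inner2_eq, Pminus, hodge]; simp; ring

theorem Pplus_add_of_hodge (hp : hodge p = p) (hq : hodge q = -q) : Pplus (p + q) = p := by
  rw [Pplus, hodge_add, hp, hq]; module

theorem Pminus_add_of_hodge (hp : hodge p = p) (hq : hodge q = -q) : Pminus (p + q) = q := by
  rw [Pminus, hodge_add, hp, hq]; module

theorem inner2_add_self_of_hodge (hp : hodge p = p) (hq : hodge q = -q) :
    inner2 (p + q) (p + q) = inner2 p p + inner2 q q := by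
  rw [inner2_add_left, inner2_add_right, inner2_add_right, inner2_comm q p,
    inner2_eq_zero_of_hodge hp hq]
  ring

theorem inner2_add_hodge_add_of_hodge (hp : hodge p = p) (hq : hodge q = -q) :
    inner2 (p + q) (hodge (p + q)) = inner2 p p - inner2 q q := by
  rw [hodge_add, hp, hq, inner2_add_left, inner2_add_right, inner2_add_right, inner2_neg_right,
    inner2_neg_right, inner2_comm q p]
  ring

/-- `⟨F, ⋆F⟩` is twice the Pfaffian `F₀₁F₂₃ - F₀₂F₁₃ + F₀₃F₁₂`; its vanishing gives the
quadratic Plücker relations. -/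
theorem plucker (hF : Fᵀ = -F) (h : inner2 F (hodge F) = 0) (i j k l : Fin 4) :
    F i j * F k l = F i k * F j l - F i l * F j k := by
  obtain ⟨a₀₁, a₀₂, a₀₃, a₁₂, a₁₃, a₂₃, rfl⟩ := exists_eq_of_transpose_eq_neg hF
  simp [inner2_eq, hodge] at h
  fin_cases i <;> fin_cases j <;> fin_cases k <;> fin_cases l <;> simp <;>
    first | ring1 | linear_combination h / 2 | linear_combination -h / 2

theorem exists_wedge_of_inner2_hodge_self (hF : Fᵀ = -F) (h : inner2 F (hodge F) = 0) :
    ∃ u v, F = wedge u v := by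
  by_cases hzero : F = 0
  · exact ⟨0, 0, by simp [hzero, wedge]⟩
  obtain ⟨i, j, hij⟩ : ∃ i j, F i j ≠ 0 := by
    by_contra! h0
    exact hzero (Matrix.ext h0)
  -- the Plücker relations express every `F k l` through the rows `i` and `j`
  refine ⟨(F i j)⁻¹ • F i, F j, ?_⟩
  ext k l
  simp only [wedge, Matrix.sub_apply, vecMulVec_apply, Pi.smul_apply, smul_eq_mul]
  field_simp
  linear_combination plucker hF h i j k l

theorem inner2_wedge_hodge_wedge (u v : Fin 4 → ℝ) :
    inner2 (wedge u v) (hodge (wedge u v)) = 0 := by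
  simp [inner2_eq, hodge, wedge, vecMulVec_apply]; ring

theorem inner2_wedge (hX : Xᵀ = -X) (u v : Fin 4 → ℝ) : inner2 X (wedge u v) = u ⬝ᵥ X *ᵥ v := by
  obtain ⟨a₀₁, a₀₂, a₀₃, a₁₂, a₁₃, a₂₃, rfl⟩ := exists_eq_of_transpose_eq_neg hX
  simp [inner2_eq, wedge, vecMulVec_apply, dotProduct, mulVec, Fin.sum_univ_four]; ring

end

theorem stmt_7_general (a b c : ℝ)
    (xJ J : Matrix (Fin 4) (Fin 4) ℝ)
    (hxJ : xJ = !![0, a, b, c;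
                   -a, 0, c, -b;
                   -b, -c, 0, a;
                   -c, b, -a, 0])
    (hJ : J = !![0, -a, -b, -c;
                 a, 0, -c, b;
                 b, c, 0, -a;
                 c, -b, a, 0]) :
    (∀ ξ η : Fin 4 → ℝ, ξ ⬝ᵥ ξ = 1 → η ⬝ᵥ η = 1 → ξ ⬝ᵥ η = 0 →
      ((J *ᵥ ξ) ⬝ᵥ η = 0 ↔
        inner2 xJ (Pplus (Matrix.vecMulVec ξ η - Matrix.vecMulVec η ξ)) = 0)) ∧
    (fun F => (Pplus F, Pminus F)) ''
        {F | ((∃ u v : Fin 4 → ℝ, F = Matrix.vecMulVec u v - Matrix.vecMulVec v u) ∧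
              inner2 F F = 1) ∧ inner2 xJ F = 0} =
      {p | (pᵀ = -p ∧ hodge p = p ∧ inner2 p p = 1/2) ∧ inner2 xJ p = 0} ×ˢ
      {q | qᵀ = -q ∧ hodge q = -q ∧ inner2 q q = 1/2} := by
  have hxJ_skew : xJᵀ = -xJ := by
    subst hxJ; ext i j; fin_cases i <;> fin_cases j <;> simp
  have hxJ_self_dual : hodge xJ = xJ := by
    subst hxJ; ext i j; fin_cases i <;> fin_cases j <;> simp [hodge]
  have hJ_transpose : Jᵀ = xJ := by
    subst hxJ hJ; ext i j; fin_cases i <;> fin_cases j <;> simp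
  refine ⟨fun ξ η _ _ _ => ?_, ?_⟩
  · change _ ↔ inner2 xJ (Pplus (wedge ξ η)) = 0
    rw [inner2_Pplus_right_of_hodge hxJ_self_dual, inner2_wedge hxJ_skew, dotProduct_mulVec,
      ← hJ_transpose, vecMul_transpose]
  ext ⟨p, q⟩
  simp only [Set.mem_image, Set.mem_ofPred_eq, Set.mem_prod, Prod.mk.injEq]
  constructor
  · rintro ⟨F, ⟨⟨⟨u, v, hF⟩, hnorm⟩, horth⟩, rfl, rfl⟩
    replace hF : F = wedge u v := hF
    subst hF
    have hskew := wedge_transpose u v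
    have hplucker := inner2_wedge_hodge_wedge u v
    refine ⟨⟨⟨Pplus_transpose hskew, hodge_Pplus hskew, ?_⟩, ?_⟩,
      Pminus_transpose hskew, hodge_Pminus hskew, ?_⟩
    · rw [inner2_Pplus_self, hnorm, hplucker]; norm_num
    · rwa [inner2_Pplus_right_of_hodge hxJ_self_dual]
    · rw [inner2_Pminus_self, hnorm, hplucker]; norm_num
  · rintro ⟨⟨⟨hpT, hp, hpp⟩, hxp⟩, hqT, hq, hqq⟩
    have hskew : (p + q)ᵀ = -(p + q) := by rw [transpose_add, hpT, hqT, neg_add]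
    have hplucker : inner2 (p + q) (hodge (p + q)) = 0 := by
      rw [inner2_add_hodge_add_of_hodge hp hq, hpp, hqq, sub_self]
    refine ⟨p + q, ⟨⟨exists_wedge_of_inner2_hodge_self hskew hplucker, ?_⟩, ?_⟩,
      Pplus_add_of_hodge hp hq, Pminus_add_of_hodge hp hq⟩
    · rw [inner2_add_self_of_hodge hp hq, hpp, hqq]; norm_num
    · rw [inner2_add_right, hxp, inner2_eq_zero_of_hodge hxJ_self_dual hq, add_zero]

/-- fix a unit self-dual `x_J` (with coordinates `(a,b,c)`,
`a² + b² + c² = 1`) corresponding to the complex structure `J`.  A 2-plane spanned by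
orthonormal `ξ, η` is Lagrangian for `ω_J(ξ,η) = ⟨Jξ,η⟩` iff `⟨x_J, P₊(ξ∧η)⟩ = 0`;
consequently, under `G(2,4) ≅ S²₊ × S²₋`, the Lagrangian Grassmannian corresponds to
`S¹ × S²₋` with `S¹` the great circle of `S²₊` orthogonal to `x_J`. -/
theorem stmt_7 (a b c : ℝ) (hunit : a ^ 2 + b ^ 2 + c ^ 2 = 1)
    (xJ J : Matrix (Fin 4) (Fin 4) ℝ)
    (hxJ : xJ = !![0, a, b, c;
                   -a, 0, c, -b;
                   -b, -c, 0, a;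
                   -c, b, -a, 0])
    (hJ : J = !![0, -a, -b, -c;
                 a, 0, -c, b;
                 b, c, 0, -a;
                 c, -b, a, 0]) :
    (∀ ξ η : Fin 4 → ℝ, ξ ⬝ᵥ ξ = 1 → η ⬝ᵥ η = 1 → ξ ⬝ᵥ η = 0 →
      ((J *ᵥ ξ) ⬝ᵥ η = 0 ↔
        inner2 xJ (Pplus (Matrix.vecMulVec ξ η - Matrix.vecMulVec η ξ)) = 0)) ∧
    (fun F => (Pplus F, Pminus F)) ''
        {F | ((∃ u v : Fin 4 → ℝ, F = Matrix.vecMulVec u v - Matrix.vecMulVec v u) ∧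
              inner2 F F = 1) ∧ inner2 xJ F = 0} =
      {p | (pᵀ = -p ∧ hodge p = p ∧ inner2 p p = 1/2) ∧ inner2 xJ p = 0} ×ˢ
      {q | qᵀ = -q ∧ hodge q = -q ∧ inner2 q q = 1/2} :=
  stmt_7_general a b c xJ J hxJ hJ
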